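/- arXiv:1611.01919 — 4 statements merged into one kernel-verified Lean document; each statement's English description precedes it below -/
import Mathlib

section
/- Laplace mechanism privacy guarantee: Let f be a real-valued query on datasets whose global sensitivity is at most Δ > 0, i.e., |f(x) − f(y)| ≤ Δ for all neighboring datasets x, y. Fix ε > 0 and let M(x) be the probability measure on ℝ given by the Laplace distribution Lap(f(x), Δ/ε). Then M satisfies ε-differential privacy: for all neighboring datasets x, y and every measurable set S ⊆ ℝ, M(x)(S) ≤ e^ε · M(y)(S). -/
open MeasureTheory

/-- The Laplace distribution `Lap(μ, b)` on `ℝ`, given by its density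
`t ↦ (1/(2b)) · exp(−|t − μ|/b)` with respect to Lebesgue measure. -/
noncomputable def laplaceMeasure (μ b : ℝ) : Measure ℝ :=
  volume.withDensity (fun t => ENNReal.ofReal ((1 / (2 * b)) * Real.exp (-|t - μ| / b)))

/-- Two datasets (finite multisets of records) are neighbors if one is obtained
from the other by adding a single record. -/
def Neighbor {D : Type*} (x y : Multiset D) : Prop :=
  (∃ r, y = r ::ₘ x) ∨ (∃ r, x = r ::ₘ y)

/-- **Laplace mechanism privacy guarantee.** If a real-valued query `f` has global
sensitivity at most `Δ > 0`, then the mechanism `M(x) = Lap(f(x), Δ/ε)` satisfies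
`ε`-differential privacy. -/
theorem laplace_mechanism_dp {D : Type*} (f : Multiset D → ℝ) (Δ ε : ℝ)
    (hΔ : 0 < Δ) (hε : 0 < ε)
    (hsens : ∀ x y : Multiset D, Neighbor x y → |f x - f y| ≤ Δ) :
    ∀ x y : Multiset D, Neighbor x y → ∀ S : Set ℝ, MeasurableSet S →
      laplaceMeasure (f x) (Δ / ε) S ≤
        ENNReal.ofReal (Real.exp ε) * laplaceMeasure (f y) (Δ / ε) S := by
  intro x y hxy S hS
  have hb : 0 < Δ / ε := div_pos hΔ hε
  have hc : 0 < 1 / (2 * (Δ / ε)) := by positivity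
  rw [laplaceMeasure, laplaceMeasure, withDensity_apply _ hS, withDensity_apply _ hS,
    ← lintegral_const_mul' _ _ (by simp : ENNReal.ofReal (Real.exp ε) ≠ ⊤)]
  refine lintegral_mono fun t => ?_
  rw [← ENNReal.ofReal_mul (Real.exp_nonneg ε)]
  apply ENNReal.ofReal_le_ofReal
  rw [mul_left_comm]
  apply mul_le_mul_of_nonneg_left _ hc.le
  rw [← Real.exp_add]
  apply Real.exp_le_exp.mpr
  have h1 : |t - f x| ≥ |t - f y| - Δ := by
    have := abs_sub_abs_le_abs_sub (t - f y) (t - f x)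
    have h2 : |t - f y - (t - f x)| = |f x - f y| := by ring_nf
    have h3 := hsens x y hxy
    linarith
  rw [div_le_iff₀ hb] at *
  have : (ε + -|t - f y| / (Δ / ε)) * (Δ / ε) = ε * (Δ / ε) - |t - f y| := by
    field_simp
    ring
  nlinarith [mul_pos hε hb, hε.ne', (div_mul_cancel₀ Δ hε.ne' : Δ / ε * ε = Δ)]
end

section
/- Exponential mechanism privacy guarantee: Let Z be a finite nonempty set of outputs and u a scoring function assigning to each output z ∈ Z and each dataset x a real score u(z, x), with sensitivity bound Δ > 0: |u(z, x) − u(z, y)| ≤ Δ for all z ∈ Z and all neighboring datasets x, y. Fix ε > 0 and let M(x) be the probability distribution on Z defined by Pr(M(x) = z) = exp(ε·u(z, x)/(2Δ)) / Σ_{z'∈Z} exp(ε·u(z', x)/(2Δ)). Then M satisfies ε-differential privacy: for all neighboring datasets x, y and every z ∈ Z, Pr(M(x) = z) ≤ e^ε · Pr(M(y) = z). -/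
/-- **Exponential mechanism privacy guarantee.** If the scoring function `u` has
sensitivity at most `Δ > 0` in its dataset argument, then outputting `z` with
probability proportional to `exp(ε·u(z,x)/(2Δ))` satisfies `ε`-differential
privacy. -/
theorem exponential_mechanism_dp {D Z : Type*} [Fintype Z] [Nonempty Z]
    (u : Z → Multiset D → ℝ) (Δ ε : ℝ) (hΔ : 0 < Δ) (hε : 0 < ε)
    (hsens : ∀ (z : Z) (x y : Multiset D), Neighbor x y → |u z x - u z y| ≤ Δ) :
    ∀ x y : Multiset D, Neighbor x y → ∀ z : Z,
      Real.exp (ε * u z x / (2 * Δ)) / (∑ z' : Z, Real.exp (ε * u z' x / (2 * Δ))) ≤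
        Real.exp ε *
          (Real.exp (ε * u z y / (2 * Δ)) / (∑ z' : Z, Real.exp (ε * u z' y / (2 * Δ)))) := by
  intro x y hxy z
  have hnsym : Neighbor y x := by
    rcases hxy with ⟨r, hr⟩ | ⟨r, hr⟩
    · exact Or.inr ⟨r, hr⟩
    · exact Or.inl ⟨r, hr⟩
  set Sx := ∑ z' : Z, Real.exp (ε * u z' x / (2 * Δ)) with hSx
  set Sy := ∑ z' : Z, Real.exp (ε * u z' y / (2 * Δ)) with hSy
  have hSxpos : 0 < Sx := Finset.sum_pos (fun i _ => Real.exp_pos _) Finset.univ_nonempty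
  have hSypos : 0 < Sy := Finset.sum_pos (fun i _ => Real.exp_pos _) Finset.univ_nonempty
  -- pointwise bound: exp(ε u z' a /(2Δ)) ≤ exp(ε/2) * exp(ε u z' b /(2Δ)) for neighbors
  have key : ∀ (w : Z) (a b : Multiset D), Neighbor a b →
      Real.exp (ε * u w a / (2 * Δ)) ≤ Real.exp (ε / 2) * Real.exp (ε * u w b / (2 * Δ)) := by
    intro w a b hab
    rw [← Real.exp_add]
    apply Real.exp_le_exp.2
    have h := (abs_le.1 (hsens w a b hab)).2
    have h2 : ε * u w a / (2 * Δ) - ε * u w b / (2 * Δ) = (ε / (2 * Δ)) * (u w a - u w b) := by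
      ring
    have h3 : (ε / (2 * Δ)) * (u w a - u w b) ≤ (ε / (2 * Δ)) * Δ := by
      apply mul_le_mul_of_nonneg_left h
      positivity
    have h4 : (ε / (2 * Δ)) * Δ = ε / 2 := by
      field_simp
    nlinarith [h2, h3, h4]
  have hnum : Real.exp (ε * u z x / (2 * Δ)) ≤ Real.exp (ε / 2) * Real.exp (ε * u z y / (2 * Δ)) :=
    key z x y hxy
  have hden : Sy ≤ Real.exp (ε / 2) * Sx := by
    rw [hSy, hSx, Finset.mul_sum]
    exact Finset.sum_le_sum fun i _ => key i y x hnsym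
  have hεexp : Real.exp (ε / 2) * Real.exp (ε / 2) = Real.exp ε := by
    rw [← Real.exp_add]; ring_nf
  rw [div_le_iff₀ hSxpos]
  have h1 : Real.exp ε * (Real.exp (ε * u z y / (2 * Δ)) / Sy) * Sx
      = Real.exp ε * Real.exp (ε * u z y / (2 * Δ)) * (Sx / Sy) := by ring
  have hexp2 : (0:ℝ) < Real.exp (ε / 2) := Real.exp_pos _
  have hratio : Real.exp (-(ε / 2)) ≤ Sx / Sy := by
    rw [le_div_iff₀ hSypos]
    calc Real.exp (-(ε / 2)) * Sy ≤ Real.exp (-(ε / 2)) * (Real.exp (ε / 2) * Sx) := by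
          apply mul_le_mul_of_nonneg_left hden (le_of_lt (Real.exp_pos _))
      _ = Sx := by rw [← mul_assoc, ← Real.exp_add]; simp
  calc Real.exp (ε * u z x / (2 * Δ))
      ≤ Real.exp (ε / 2) * Real.exp (ε * u z y / (2 * Δ)) := hnum
    _ = Real.exp ε * Real.exp (ε * u z y / (2 * Δ)) * Real.exp (-(ε / 2)) := by
        rw [mul_assoc, ← Real.exp_add, ← Real.exp_add, ← Real.exp_add]; congr 1; ring
    _ ≤ Real.exp ε * Real.exp (ε * u z y / (2 * Δ)) * (Sx / Sy) := by
        apply mul_le_mul_of_nonneg_left hratio; positivity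
    _ = Real.exp ε * (Real.exp (ε * u z y / (2 * Δ)) / Sy) * Sx := by ring
end

section
/- Local sensitivity bound for the Gini impurity (Fletcher and Islam, 2015): Let C be a finite set of class labels and let x be a multiset of labels from C with |x| = n ≥ 1. Then for every label c ∈ C, adding one record with label c changes the Gini impurity by at most 1 − (n/(n+1))² − (1/(n+1))², i.e., |G(x + {c}) − G(x)| ≤ 1 − (n/(n+1))² − (1/(n+1))². (Equivalently, the local sensitivity of the Gini impurity at a node with support n is 1 − (n/(n+1))² − (1/(n+1))², which is strictly less than the global worst-case value of 1/2 for n ≥ 2.) -/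
/-- The Gini impurity `G(x) = 1 − Σ_{c∈C} (n^c/n)²` of a finite multiset `x` of
class labels, where `n = |x|` and `n^c` is the number of occurrences of `c`. -/
noncomputable def gini {C : Type*} [Fintype C] [DecidableEq C] (x : Multiset C) : ℝ :=
  1 - ∑ c : C, ((x.count c : ℝ) / (Multiset.card x : ℝ)) ^ 2

set_option maxHeartbeats 1000000 in
/-- **Local sensitivity bound for the Gini impurity** (Fletcher and Islam, 2015).
At a node with support `n ≥ 1`, adding one record with any label `c` changes the
Gini impurity by at most `1 − (n/(n+1))² − (1/(n+1))²` (which is strictly less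
than the global worst case of `1/2` for `n ≥ 2`). -/
theorem gini_local_sensitivity {C : Type*} [Fintype C] [DecidableEq C]
    (x : Multiset C) (n : ℕ) (hn : 1 ≤ n) (hcard : Multiset.card x = n) (c : C) :
    |gini (c ::ₘ x) - gini x| ≤
      1 - ((n : ℝ) / ((n : ℝ) + 1)) ^ 2 - (1 / ((n : ℝ) + 1)) ^ 2 := by
  classical
  -- sum of counts equals n
  have hsum : ∑ c' : C, x.count c' = n := by
    rw [← hcard, ← Multiset.toFinset_sum_count_eq]
    exact (Finset.sum_subset (Finset.subset_univ _) (fun y _ hy =>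
      Multiset.count_eq_zero_of_notMem (by simpa using hy))).symm
  set a : ℕ := x.count c with ha
  set t : ℕ := ∑ c' ∈ Finset.univ.erase c, x.count c' with ht
  have hta : t + a = n := by
    rw [← hsum, ht, ha]
    exact Finset.sum_erase_add _ _ (Finset.mem_univ c)
  set S : ℝ := ∑ c' : C, (x.count c' : ℝ) ^ 2 with hS
  have hSsplit : S = (∑ c' ∈ Finset.univ.erase c, (x.count c' : ℝ) ^ 2) + (a : ℝ) ^ 2 := by
    rw [hS, ← Finset.sum_erase_add _ _ (Finset.mem_univ c)]
  -- lower bound on S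
  have hSlow : (a : ℝ) ^ 2 + ((t : ℝ)) ≤ S := by
    have h1 : (t : ℕ) ≤ ∑ c' ∈ Finset.univ.erase c, (x.count c') ^ 2 :=
      Finset.sum_le_sum fun i _ => Nat.le_self_pow two_ne_zero _
    have h1' : (t : ℝ) ≤ ∑ c' ∈ Finset.univ.erase c, (x.count c' : ℝ) ^ 2 := by
      calc (t : ℝ) ≤ ((∑ c' ∈ Finset.univ.erase c, (x.count c') ^ 2 : ℕ) : ℝ) := by
            exact_mod_cast h1
        _ = _ := by push_cast; ring
    rw [hSsplit]; linarith
  -- upper bound on S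
  have hSup : S ≤ (a : ℝ) ^ 2 + (t : ℝ) ^ 2 := by
    have h1 : ∑ c' ∈ Finset.univ.erase c, (x.count c') ^ 2 ≤ t ^ 2 := by
      calc ∑ c' ∈ Finset.univ.erase c, (x.count c') ^ 2
          ≤ ∑ c' ∈ Finset.univ.erase c, (x.count c') * t :=
            Finset.sum_le_sum fun i hi => by
              rw [pow_two]
              exact Nat.mul_le_mul_left _
                (Finset.single_le_sum (f := fun j => Multiset.count j x)
                  (fun j _ => Nat.zero_le _) hi)
        _ = t * t := by rw [← Finset.sum_mul]
        _ = t ^ 2 := (pow_two t).symm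
    have h1' : (∑ c' ∈ Finset.univ.erase c, (x.count c' : ℝ) ^ 2) ≤ (t : ℝ) ^ 2 := by
      calc (∑ c' ∈ Finset.univ.erase c, (x.count c' : ℝ) ^ 2)
          = ((∑ c' ∈ Finset.univ.erase c, (x.count c') ^ 2 : ℕ) : ℝ) := by push_cast; ring
        _ ≤ _ := by exact_mod_cast h1
    rw [hSsplit]; linarith
  set N : ℝ := (n : ℝ) with hN
  have hN1 : (1 : ℝ) ≤ N := by rw [hN]; exact_mod_cast hn
  have hN0 : (0 : ℝ) < N := by linarith
  have hM0 : (0 : ℝ) < N + 1 := by linarith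
  set A : ℝ := (a : ℝ) with hA
  have hA0 : (0 : ℝ) ≤ A := by positivity
  have hAN : A ≤ N := by
    rw [hA, hN]; exact_mod_cast le_of_add_le_right (le_of_eq hta)
  have hT : (t : ℝ) = N - A := by
    rw [hA, hN]
    have : (t : ℝ) + A = N := by rw [hA, hN]; exact_mod_cast hta
    linarith [this]
  rw [hT] at hSlow hSup
  -- gini formulas
  have hg1 : gini x = 1 - S / N ^ 2 := by
    rw [gini, hcard, hS, ← hN, Finset.sum_div]
    congr 1
    exact Finset.sum_congr rfl fun c' _ => by rw [div_pow]
  have hcnt : ∀ c' : C, ((c ::ₘ x).count c' : ℝ) ^ 2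
      = (x.count c' : ℝ) ^ 2 + (if c' = c then 2 * (x.count c' : ℝ) + 1 else 0) := by
    intro c'
    rw [Multiset.count_cons]
    split_ifs <;> push_cast <;> ring
  have hS2 : ∑ c' : C, ((c ::ₘ x).count c' : ℝ) ^ 2 = S + 2 * A + 1 := by
    rw [Finset.sum_congr rfl fun c' _ => hcnt c', Finset.sum_add_distrib,
      Finset.sum_ite_eq' Finset.univ c (fun c' => 2 * (x.count c' : ℝ) + 1),
      if_pos (Finset.mem_univ c), ← hS, ← ha, ← hA]
    ring
  have hcard2 : ((Multiset.card (c ::ₘ x) : ℕ) : ℝ) = N + 1 := by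
    rw [Multiset.card_cons, hcard]; push_cast; rfl
  have hg2 : gini (c ::ₘ x) = 1 - (S + 2 * A + 1) / (N + 1) ^ 2 := by
    rw [gini, hcard2, ← hS2, Finset.sum_div]
    congr 1
    exact Finset.sum_congr rfl fun c' _ => by rw [div_pow]
  rw [hg1, hg2]
  have e1 : (1 - (S + 2 * A + 1) / (N + 1) ^ 2) - (1 - S / N ^ 2)
      = (S * (N + 1) ^ 2 - (S + 2 * A + 1) * N ^ 2) / (N ^ 2 * (N + 1) ^ 2) := by
    field_simp
    ring
  have e2 : 1 - (N / (N + 1)) ^ 2 - (1 / (N + 1)) ^ 2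
      = (2 * N * N ^ 2) / (N ^ 2 * (N + 1) ^ 2) := by
    field_simp
    ring
  have hden : (0 : ℝ) < N ^ 2 * (N + 1) ^ 2 := mul_pos (pow_pos hN0 2) (pow_pos hM0 2)
  rw [e1, e2, abs_div, abs_of_pos hden, div_le_div_iff_of_pos_right hden]
  rw [abs_le]
  constructor
  · -- lower: -(2N³) ≤ S(N+1)² - (S+2A+1)N², i.e. (2A+1)N² - S(2N+1) ≤ 2N³
    nlinarith [sq_nonneg (2 * (2 * N + 1) * A - (2 * N ^ 2 + 2 * N + 1)), hSlow, hN1,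
      mul_pos hN0 hN0, mul_pos (mul_pos hN0 hN0) hN0, sq_nonneg N, sq_nonneg (N - A)]
  · -- upper: S(2N+1) - (2A+1)N² ≤ 2N³
    have hfac : (0:ℝ) ≤ 3*N^2 + N - (2*N+1)*A := by nlinarith [hAN, hN0, hA0, sq_nonneg N]
    have key : (A^2 + (N-A)^2) * (2*N+1) ≤ 2*N^3 + (2*A+1)*N^2 := by
      nlinarith [mul_nonneg hA0 hfac]
    have hmul : S * (2*N+1) ≤ (A^2 + (N-A)^2) * (2*N+1) :=
      mul_le_mul_of_nonneg_right hSup (by linarith)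
    nlinarith [hmul, key]
end

section
/- Global sensitivity of the Gini impurity: Let C be a finite set of class labels and let x be a nonempty multiset of labels from C. Then for every label c ∈ C, |G(x + {c}) − G(x)| ≤ 1/2; that is, adding (or, symmetrically, removing) a single record changes the Gini impurity of a nonempty node by at most 1/2, so the global sensitivity of the Gini impurity over nonempty datasets is 1/2, with equality attained when x consists of a single record and c is a different label. -/
lemma sum_count_univ {C : Type*} [Fintype C] [DecidableEq C] (x : Multiset C) :
    ∑ c : C, x.count c = Multiset.card x := by
  rw [← Multiset.toFinset_sum_count_eq x]
  exact (Finset.sum_subset (Finset.subset_univ _) (by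
    intro a _ ha
    simpa [Multiset.count_eq_zero] using ha)).symm

/-- **Global sensitivity of the Gini impurity.** Adding a single record to a
nonempty node changes the Gini impurity by at most `1/2`, and this bound is
attained when the node consists of a single record and the added record has a
different label. -/
theorem gini_global_sensitivity {C : Type*} [Fintype C] [DecidableEq C] :
    (∀ x : Multiset C, x ≠ 0 → ∀ c : C, |gini (c ::ₘ x) - gini x| ≤ 1 / 2) ∧
      (∀ c c' : C, c ≠ c' →
        |gini (c ::ₘ ({c'} : Multiset C)) - gini ({c'} : Multiset C)| = 1 / 2) := by
  constructor
  · intro x hx c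
    set N : ℝ := (Multiset.card x : ℝ) with hNdef
    set K : ℝ := (x.count c : ℝ) with hKdef
    set S : ℝ := ∑ i : C, ((x.count i : ℝ)) ^ 2 with hSdef
    have hN1 : 1 ≤ N := by
      have h : 0 < Multiset.card x := Multiset.card_pos.mpr hx
      rw [hNdef]
      exact_mod_cast h
    have hN0 : (0:ℝ) < N := by linarith
    have hN10 : (0:ℝ) < N + 1 := by linarith
    have hK0 : 0 ≤ K := by positivity
    have hKN : K ≤ N := by
      rw [hKdef, hNdef]
      exact_mod_cast Multiset.count_le_card c x
    have hsum : ∑ i : C, ((x.count i : ℝ)) = N := by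
      rw [hNdef, ← sum_count_univ x]
      push_cast
      rfl
    have hSN2 : S ≤ N ^ 2 := by
      rw [hSdef, ← hsum]
      exact Finset.sum_sq_le_sq_sum_of_nonneg (fun i _ => by positivity)
    have hSN : N ≤ S := by
      rw [hSdef, ← hsum]
      apply Finset.sum_le_sum
      intro i _
      have : x.count i ≤ (x.count i) ^ 2 := Nat.le_self_pow two_ne_zero _
      exact_mod_cast this
    have hgx : gini x = 1 - S / N ^ 2 := by
      rw [gini, hSdef, Finset.sum_div]
      congr 1
      apply Finset.sum_congr rfl
      intro i _
      rw [div_pow]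
    have hgcx : gini (c ::ₘ x) = 1 - (S + 2 * K + 1) / (N + 1) ^ 2 := by
      rw [gini]
      have hcard : ((Multiset.card (c ::ₘ x) : ℕ) : ℝ) = N + 1 := by
        rw [Multiset.card_cons]; push_cast; rfl
      have hsum2 : ∑ i : C, (((c ::ₘ x).count i : ℝ)) ^ 2 = S + 2 * K + 1 := by
        have : ∀ i : C, (((c ::ₘ x).count i : ℝ)) ^ 2
            = ((x.count i : ℝ)) ^ 2 + (if i = c then 2 * (x.count i : ℝ) + 1 else 0) := by
          intro i
          rw [Multiset.count_cons]
          by_cases h : i = c <;> simp [h] <;> push_cast <;> ring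
        rw [Finset.sum_congr rfl (fun i _ => this i), Finset.sum_add_distrib,
          Finset.sum_ite_eq' Finset.univ c (fun i => 2 * (x.count i : ℝ) + 1)]
        simp [hSdef, hKdef]
        ring
      rw [hcard] at *
      calc 1 - ∑ i : C, (((c ::ₘ x).count i : ℝ) / (N + 1)) ^ 2
          = 1 - (∑ i : C, (((c ::ₘ x).count i : ℝ)) ^ 2) / (N + 1) ^ 2 := by
            rw [Finset.sum_div]
            congr 1
            exact Finset.sum_congr rfl (fun i _ => by rw [div_pow])
        _ = 1 - (S + 2 * K + 1) / (N + 1) ^ 2 := by rw [hsum2]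
    rw [hgx, hgcx]
    have hD : (1 - (S + 2 * K + 1) / (N + 1) ^ 2) - (1 - S / N ^ 2)
        = (S * (N + 1) ^ 2 - (S + 2 * K + 1) * N ^ 2) / (N ^ 2 * (N + 1) ^ 2) := by
      field_simp
      ring
    rw [hD, abs_le]
    have hden : (0:ℝ) < N ^ 2 * (N + 1) ^ 2 := by positivity
    constructor
    · rw [le_div_iff₀ hden]
      nlinarith [mul_nonneg hN0.le (sq_nonneg (N - 1)),
        mul_nonneg (by linarith : (0:ℝ) ≤ 2 * N + 1) (by linarith : 0 ≤ S - N),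
        mul_nonneg (by linarith : (0:ℝ) ≤ N - K) (sq_nonneg N), sq_nonneg (N - 1)]
    · rw [div_le_iff₀ hden]
      nlinarith [mul_nonneg hN0.le (sq_nonneg (N - 1)),
        mul_nonneg (by linarith : (0:ℝ) ≤ 2 * N + 1) (by linarith : 0 ≤ N ^ 2 - S),
        mul_nonneg hK0 (sq_nonneg N), sq_nonneg (N - 1)]
  · intro c c' hcc'
    have h1 : gini ({c'} : Multiset C) = 0 := by
      rw [gini]
      rw [Finset.sum_eq_single c']
      · simp
      · intro b _ hb
        simp [Multiset.count_singleton, hb]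
      · simp
    have h2 : gini (c ::ₘ ({c'} : Multiset C)) = 1 / 2 := by
      rw [gini]
      have : ∀ i : C, (((c ::ₘ ({c'} : Multiset C)).count i : ℝ) /
          ((Multiset.card (c ::ₘ ({c'} : Multiset C)) : ℕ) : ℝ)) ^ 2
          = if i = c then 1/4 else if i = c' then 1/4 else 0 := by
        intro i
        rw [Multiset.count_cons, Multiset.count_singleton]
        by_cases h : i = c
        · simp [h, hcc'.symm, (show c ≠ c' from hcc')]
          norm_num
        · by_cases h' : i = c'
          · simp [h, h']
            rw [if_neg (show ¬ c' = c from fun e => hcc' e.symm)]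
            norm_num
          · simp [h, h']
      have split : ∀ i : C, (if i = c then (1/4:ℝ) else if i = c' then 1/4 else 0)
          = (if i = c then 1/4 else 0) + (if i = c' then 1/4 else 0) := by
        intro i
        by_cases h : i = c
        · simp [h, hcc']
        · simp [h]
      rw [Finset.sum_congr rfl (fun i _ => (this i).trans (split i)), Finset.sum_add_distrib,
        Finset.sum_ite_eq' Finset.univ c, Finset.sum_ite_eq' Finset.univ c']
      norm_num
    rw [h1, h2]
    norm_num
end
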